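/- Let d ≥ 1 and suppose there exists a pair of orthogonal Latin squares of order d, i.e. functions L₁, L₂ : Fin d → Fin d → Fin d such that for each of L₁ and L₂ every row map and every column map is a bijection of Fin d, and the map (i,j) ↦ (L₁ i j, L₂ i j) is a bijection of Fin d × Fin d. Then there exists a 2-unitary permutation matrix of order d²: a permutation matrix U indexed by Fin d × Fin d such that U, U^R and U^Γ are all unitary. -/
import Mathlib


open Matrix Complex BigOperators

noncomputable section

/-- Reshuffling: `X^R_{(j,k),(l,m)} = X_{(j,l),(k,m)}`. -/
def reshuffle {d : ℕ} (X : Matrix (Fin d × Fin d) (Fin d × Fin d) ℂ) :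
    Matrix (Fin d × Fin d) (Fin d × Fin d) ℂ :=
  fun p q => X (p.1, q.1) (p.2, q.2)

/-- Partial transpose: `X^Γ_{(j,k),(l,m)} = X_{(j,m),(l,k)}`. -/
def ptranspose {d : ℕ} (X : Matrix (Fin d × Fin d) (Fin d × Fin d) ℂ) :
    Matrix (Fin d × Fin d) (Fin d × Fin d) ℂ :=
  fun p q => X (p.1, q.2) (q.1, p.2)

def IsUnitary {n : Type*} [Fintype n] [DecidableEq n] (M : Matrix n n ℂ) : Prop :=
  M ∈ Matrix.unitaryGroup n ℂ
def permMat {n : Type*} [Fintype n] [DecidableEq n] (σ : n → n) : Matrix n n ℂ :=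
  fun p q => if σ p = q then 1 else 0

variable {n : Type*} [Fintype n] [DecidableEq n]

lemma permMat_zero_one (σ : n → n) (p q : n) : permMat σ p q = 0 ∨ permMat σ p q = 1 := by
  unfold permMat; split <;> simp

lemma permMat_row (σ : n → n) (p : n) : ∃! q, permMat σ p q = 1 := by
  refine ⟨σ p, by simp [permMat], fun q hq => ?_⟩
  by_cases h : σ p = q
  · exact h.symm
  · simp [permMat, h] at hq

lemma permMat_col (σ : n → n) (hσ : Function.Bijective σ) (q : n) :
    ∃! p, permMat σ p q = 1 := by
  obtain ⟨p, hp⟩ := hσ.2 q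
  refine ⟨p, by simp [permMat, hp], fun p' hp' => ?_⟩
  by_cases h : σ p' = q
  · exact hσ.1 (h.trans hp.symm)
  · simp [permMat, h] at hp'

lemma permMat_unitary (σ : n → n) (hσ : Function.Bijective σ) :
    permMat σ ∈ Matrix.unitaryGroup n ℂ := by
  rw [Matrix.mem_unitaryGroup_iff]
  ext p p'
  simp only [Matrix.mul_apply, permMat, Matrix.star_apply, apply_ite (star : ℂ → ℂ),
    star_one, star_zero, ite_mul, one_mul, zero_mul, Matrix.one_apply]
  rw [Finset.sum_ite_eq Finset.univ (σ p)]
  simp [hσ.1.eq_iff, eq_comm]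


/-- A pair of orthogonal Latin squares of order `d` yields a 2-unitary permutation
matrix of order `d²`. -/
theorem OLS_gives_two_unitary_permutation_matrix (d : ℕ) (hd : 1 ≤ d)
    (L₁ L₂ : Fin d → Fin d → Fin d)
    (hrow₁ : ∀ i, Function.Bijective (L₁ i))
    (hcol₁ : ∀ j, Function.Bijective (fun i => L₁ i j))
    (hrow₂ : ∀ i, Function.Bijective (L₂ i))
    (hcol₂ : ∀ j, Function.Bijective (fun i => L₂ i j))
    (horth : Function.Bijective (fun p : Fin d × Fin d => (L₁ p.1 p.2, L₂ p.1 p.2))) :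
    ∃ U : Matrix (Fin d × Fin d) (Fin d × Fin d) ℂ,
      (∀ p q, U p q = 0 ∨ U p q = 1) ∧
      (∀ p, ∃! q, U p q = 1) ∧
      (∀ q, ∃! p, U p q = 1) ∧
      IsUnitary U ∧ IsUnitary (reshuffle U) ∧ IsUnitary (ptranspose U) := by
  classical
  set σ₀ : Fin d × Fin d → Fin d × Fin d := fun p => (L₁ p.1 p.2, L₂ p.1 p.2) with hσ₀
  set e₁ : Fin d → Fin d ≃ Fin d := fun j => Equiv.ofBijective _ (hrow₁ j) with he₁
  set e₂ : Fin d → Fin d ≃ Fin d := fun j => Equiv.ofBijective _ (hrow₂ j) with he₂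
  have he₁app : ∀ j l, e₁ j l = L₁ j l := fun _ _ => rfl
  have he₂app : ∀ j l, e₂ j l = L₂ j l := fun _ _ => rfl
  -- the map whose permutation matrix is `reshuffle U`
  set τR : Fin d × Fin d → Fin d × Fin d :=
    fun p => ((e₁ p.1).symm p.2, L₂ p.1 ((e₁ p.1).symm p.2)) with hτR
  -- the map whose permutation matrix is `ptranspose U`
  set τP : Fin d × Fin d → Fin d × Fin d :=
    fun p => (L₁ p.1 ((e₂ p.1).symm p.2), (e₂ p.1).symm p.2) with hτP
  have hτRbij : Function.Bijective τR := by
    rw [← Finite.injective_iff_bijective]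
    rintro ⟨j, k⟩ ⟨j', k'⟩ h
    simp only [hτR, Prod.mk.injEq] at h
    obtain ⟨h1, h2⟩ := h
    have hj : j = j' := (hcol₂ ((e₁ j').symm k')).1 (by simpa [h1] using h2)
    subst hj
    have hk : k = k' := by
      have := congrArg (e₁ j) h1
      simpa using this
    simp [hk]
  have hτPbij : Function.Bijective τP := by
    rw [← Finite.injective_iff_bijective]
    rintro ⟨j, k⟩ ⟨j', k'⟩ h
    simp only [hτP, Prod.mk.injEq] at h
    obtain ⟨h1, h2⟩ := h
    have hj : j = j' := (hcol₁ ((e₂ j').symm k')).1 (by simpa [h2] using h1)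
    subst hj
    have hk : k = k' := by
      have := congrArg (e₂ j) h2
      simpa using this
    simp [hk]
  have hresh : reshuffle (permMat σ₀) = permMat τR := by
    funext p q
    simp only [reshuffle, permMat, hσ₀, hτR]
    apply if_congr _ rfl rfl
    constructor
    · rintro h
      rw [Prod.mk.injEq] at h ⊢
      obtain ⟨h1, h2⟩ := h
      have hl : (e₁ p.1).symm p.2 = q.1 := by
        rw [Equiv.symm_apply_eq]; exact ((he₁app p.1 q.1).trans h1).symm
      exact ⟨hl, by rw [hl]; exact h2⟩
    · rintro h
      rw [Prod.mk.injEq] at h ⊢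
      obtain ⟨h1, h2⟩ := h
      have hl : L₁ p.1 q.1 = p.2 := by
        rw [← he₁app, ← h1, Equiv.apply_symm_apply]
      exact ⟨hl, by rw [← h2, h1]⟩
  have hpt : ptranspose (permMat σ₀) = permMat τP := by
    funext p q
    simp only [ptranspose, permMat, hσ₀, hτP]
    apply if_congr _ rfl rfl
    constructor
    · rintro h
      rw [Prod.mk.injEq] at h ⊢
      obtain ⟨h1, h2⟩ := h
      have hm : (e₂ p.1).symm p.2 = q.2 := by
        rw [Equiv.symm_apply_eq]; exact ((he₂app p.1 q.2).trans h2).symm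
      exact ⟨by rw [hm]; exact h1, hm⟩
    · rintro h
      rw [Prod.mk.injEq] at h ⊢
      obtain ⟨h1, h2⟩ := h
      have hm : L₂ p.1 q.2 = p.2 := by
        rw [← he₂app, ← h2, Equiv.apply_symm_apply]
      exact ⟨by rw [← h1, h2], hm⟩
  refine ⟨permMat σ₀, permMat_zero_one σ₀, permMat_row σ₀, permMat_col σ₀ horth,
    permMat_unitary σ₀ horth, ?_, ?_⟩
  · rw [hresh]; exact permMat_unitary τR hτRbij
  · rw [hpt]; exact permMat_unitary τP hτPbij
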